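/- Let (g,[·,·]_g,φ_g) and (g*,[·,·]_{g*},φ_{g*}) be Hom-Lie algebras such that (g⊕g*; g, g*) is a Manin triple for Hom-Lie algebras with the bilinear form B(x+ξ,y+η) = ξ(y) + η(x). Then φ_{g*} = (φ_g⁻¹)* and (g,g*) is a purely Hom-Lie bialgebra. -/

import Mathlib

open LinearMap Module

/-- A (regular, i.e. multiplicative with invertible structure map) Hom-Lie algebra. -/
structure HomLieAlgebra (K g : Type*) [Field K] [AddCommGroup g] [Module K g] where
  bracket : g →ₗ[K] g →ₗ[K] g
  phi : g ≃ₗ[K] g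
  skew : ∀ x y, bracket x y = - bracket y x
  phi_bracket : ∀ x y, phi (bracket x y) = bracket (phi x) (phi y)
  jacobi : ∀ x y z,
    bracket (phi x) (bracket y z) + bracket (phi y) (bracket z x)
      + bracket (phi z) (bracket x y) = 0

variable {K g V : Type*} [Field K] [AddCommGroup g] [Module K g]
  [AddCommGroup V] [Module K V]

/-- `ρ` is a representation of the Hom-Lie algebra `L` on `V` with respect to `β`. -/
def HomLieAlgebra.IsRep (L : HomLieAlgebra K g) (β : V ≃ₗ[K] V)
    (ρ : g →ₗ[K] V →ₗ[K] V) : Prop :=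
  (∀ x u, ρ (L.phi x) (β u) = β (ρ x u)) ∧
  (∀ x y u, ρ (L.bracket x y) (β u) = ρ (L.phi x) (ρ y u) - ρ (L.phi y) (ρ x u))

/-- The adjoint action of `x ∈ g` on `∧²g`, encoded on skew bilinear forms on `g*`. -/
def adExt (L : HomLieAlgebra K g) (x : g) (W : Dual K g → Dual K g → K)
    (ξ η : Dual K g) : K :=
  W (ξ ∘ₗ L.bracket x) (η ∘ₗ L.phi.toLinearMap)
    + W (ξ ∘ₗ L.phi.toLinearMap) (η ∘ₗ L.bracket x)

/-- The canonical symmetric bilinear form `B(x+ξ, y+η) = ξ(y) + η(x)`. -/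
def dbForm (p q : g × Dual K g) : K := p.2 q.1 + q.2 p.1

/-!
Invariance of the canonical form under `φ_V` forces `φ_{g*} = (φ_g⁻¹)*`, and its invariance
under the bracket expresses both components of a mixed bracket `[x, ξ]` of the double through
the brackets of `g` and `g*`. Substituting these into the `g`-component of the Jacobi identity
of the double at `(ξ ∘ φ, φ⁻¹ x, φ⁻¹ y)`, paired against `φ_{g*} η`, gives the bialgebra
condition.
-/

namespace HomLieAlgebra

theorem phi_symm_bracket (L : HomLieAlgebra K g) (u v : g) :
    L.phi.symm (L.bracket u v) = L.bracket (L.phi.symm u) (L.phi.symm v) :=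
  L.phi.injective <| by simp [L.phi_bracket]

/-- The Manin triple `(g ⊕ g*; g, g*)` for the canonical form `dbForm`. -/
structure IsManinTriple (Lg : HomLieAlgebra K g) (Lst : HomLieAlgebra K (Dual K g))
    (LV : HomLieAlgebra K (g × Dual K g)) : Prop where
  phi_eq : ∀ p : g × Dual K g, LV.phi p = (Lg.phi p.1, Lst.phi p.2)
  bracket_inl : ∀ x y : g, LV.bracket (x, 0) (y, 0) = (Lg.bracket x y, 0)
  bracket_inr : ∀ ξ η : Dual K g, LV.bracket (0, ξ) (0, η) = (0, Lst.bracket ξ η)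
  dbForm_bracket_phi : ∀ p q r : g × Dual K g,
    dbForm (LV.bracket p q) (LV.phi r) = - dbForm (LV.phi q) (LV.bracket p r)
  dbForm_phi_phi : ∀ p q : g × Dual K g, dbForm (LV.phi p) (LV.phi q) = dbForm p q

namespace IsManinTriple

variable {Lg : HomLieAlgebra K g} {Lst : HomLieAlgebra K (Dual K g)}
  {LV : HomLieAlgebra K (g × Dual K g)} (h : Lg.IsManinTriple Lst LV)
include h

theorem phi_dual_apply_phi (ξ : Dual K g) (x : g) : Lst.phi ξ (Lg.phi x) = ξ x := by
  simpa [dbForm, h.phi_eq] using h.dbForm_phi_phi (x, 0) (0, ξ)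

theorem phi_dual_apply (ξ : Dual K g) (x : g) : Lst.phi ξ x = ξ (Lg.phi.symm x) := by
  simpa using h.phi_dual_apply_phi ξ (Lg.phi.symm x)

theorem phi_dual_comp_phi (ξ : Dual K g) : Lst.phi (ξ ∘ₗ Lg.phi.toLinearMap) = ξ := by
  ext x
  simp [h.phi_dual_apply]

theorem phi_inl (x : g) : LV.phi (x, 0) = (Lg.phi x, 0) := by
  simp [h.phi_eq]

theorem phi_inr_comp_phi (ξ : Dual K g) : LV.phi (0, ξ ∘ₗ Lg.phi.toLinearMap) = (0, ξ) := by
  simp [h.phi_eq, h.phi_dual_comp_phi]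

theorem phi_dual_comp_bracket_phi (η : Dual K g) (a : g) :
    Lst.phi η ∘ₗ Lg.bracket (Lg.phi a) = Lst.phi (η ∘ₗ Lg.bracket a) := by
  ext u
  simp [h.phi_dual_apply, Lg.phi_symm_bracket]

theorem bracket_phi_dual_apply_phi (ζ θ : Dual K g) (u : g) :
    Lst.bracket (Lst.phi ζ) θ (Lg.phi u) = Lst.bracket ζ (θ ∘ₗ Lg.phi.toLinearMap) u := by
  conv_lhs => rw [← h.phi_dual_comp_phi θ, ← Lst.phi_bracket, h.phi_dual_apply_phi]

theorem bracket_inl_fst (x : g) (w : g × Dual K g) :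
    (LV.bracket (x, 0) w).1 = Lg.bracket x w.1 + (LV.bracket (x, 0) (0, w.2)).1 := by
  conv_lhs => rw [← Prod.fst_add_snd w]
  rw [map_add, h.bracket_inl, Prod.fst_add]

theorem phi_dual_apply_bracket_inl_inr_fst (x : g) (ξ η : Dual K g) :
    Lst.phi η (LV.bracket (x, 0) (0, ξ)).1 = Lst.bracket ξ η (Lg.phi x) := by
  have hinv := h.dbForm_bracket_phi (0, ξ) (x, 0) (0, η)
  rw [LV.skew] at hinv
  simpa [dbForm, h.phi_eq, h.bracket_inr] using hinv

theorem bracket_inl_inr_snd (x : g) (ξ : Dual K g) :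
    (LV.bracket (x, 0) (0, ξ ∘ₗ Lg.phi.toLinearMap)).2 = - Lst.phi (ξ ∘ₗ Lg.bracket x) := by
  ext u
  obtain ⟨z, rfl⟩ := Lg.phi.surjective u
  have hinv := h.dbForm_bracket_phi (x, 0) (0, ξ ∘ₗ Lg.phi.toLinearMap) (z, 0)
  simpa [dbForm, h.phi_eq, h.bracket_inl, h.phi_dual_comp_phi, h.phi_dual_apply_phi] using hinv

theorem phi_dual_apply_bracket_inl_bracket_inl_inr_fst (a b : g) (ξ η : Dual K g) :
    Lst.phi η (LV.bracket (Lg.phi a, 0)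
        (LV.bracket (b, 0) (0, ξ ∘ₗ Lg.phi.toLinearMap))).1
      = Lst.bracket (ξ ∘ₗ Lg.phi.toLinearMap) (η ∘ₗ Lg.bracket a) (Lg.phi b)
        - Lst.bracket (ξ ∘ₗ Lg.bracket b) (η ∘ₗ Lg.phi.toLinearMap) (Lg.phi a) := by
  rw [h.bracket_inl_fst, map_add, ← LinearMap.comp_apply (Lst.phi η),
    h.phi_dual_comp_bracket_phi, h.phi_dual_apply_bracket_inl_inr_fst,
    h.phi_dual_apply_bracket_inl_inr_fst, h.bracket_inl_inr_snd,
    map_neg, LinearMap.neg_apply, LinearMap.neg_apply, h.bracket_phi_dual_apply_phi,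
    sub_eq_add_neg]

theorem bracket_dual_apply_bracket_phi (a b : g) (ξ η : Dual K g) :
    Lst.bracket ξ η (Lg.bracket (Lg.phi a) (Lg.phi b))
      = adExt Lg a (fun ξ' η' => Lst.bracket ξ' η' (Lg.phi b)) ξ η
        - adExt Lg b (fun ξ' η' => Lst.bracket ξ' η' (Lg.phi a)) ξ η := by
  have jac := congrArg (fun p : g × Dual K g => Lst.phi η p.1)
    (LV.jacobi (0, ξ ∘ₗ Lg.phi.toLinearMap) (a, 0) (b, 0))
  rw [h.phi_inr_comp_phi, h.phi_inl, h.phi_inl, h.bracket_inl, LV.skew (0, ξ),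
    LV.skew (0, ξ ∘ₗ Lg.phi.toLinearMap), map_neg] at jac
  simp only [Prod.fst_add, Prod.fst_neg, Prod.fst_zero, map_add, map_neg, map_zero,
    h.phi_dual_apply_bracket_inl_inr_fst, h.phi_dual_apply_bracket_inl_bracket_inl_inr_fst]
    at jac
  rw [← Lg.phi_bracket]
  simp only [adExt]
  linear_combination -jac

end IsManinTriple

end HomLieAlgebra

/-- if `(g ⊕ g*; g, g*)` is a Manin triple for Hom-Lie algebras with the
canonical bilinear form, then the structure map of `g*` is `(φ_g⁻¹)*` and `(g, g*)` is a
purely Hom-Lie bialgebra. -/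
theorem manin_to_bialgebra (Lg : HomLieAlgebra K g)
    (Lst : HomLieAlgebra K (Dual K g)) (LV : HomLieAlgebra K (g × Dual K g))
    -- the structure map of the double is φ_g ⊕ φ_{g*}
    (hphi : ∀ p : g × Dual K g, LV.phi p = (Lg.phi p.1, Lst.phi p.2))
    -- g and g* are Hom-Lie subalgebras
    (hsub₁ : ∀ x y : g, LV.bracket (x, 0) (y, 0) = (Lg.bracket x y, 0))
    (hsub₂ : ∀ ξ η : Dual K g, LV.bracket (0, ξ) (0, η) = (0, Lst.bracket ξ η))
    -- the bilinear form is invariant (quadratic Hom-Lie algebra)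
    (hinv₁ : ∀ p q r : g × Dual K g,
      dbForm (LV.bracket p q) (LV.phi r) = - dbForm (LV.phi q) (LV.bracket p r))
    (hinv₂ : ∀ p q : g × Dual K g, dbForm (LV.phi p) (LV.phi q) = dbForm p q) :
    -- conclusion: φ_{g*} = (φ_g⁻¹)* and the bialgebra compatibility condition
    (∀ (ξ : Dual K g) (x : g), Lst.phi ξ x = ξ (Lg.phi.symm x)) ∧
    (∀ (x y : g) (ξ η : Dual K g),
      Lst.bracket ξ η (Lg.bracket x y)
        = adExt Lg (Lg.phi.symm x) (fun ξ' η' => Lst.bracket ξ' η' y) ξ η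
          - adExt Lg (Lg.phi.symm y) (fun ξ' η' => Lst.bracket ξ' η' x) ξ η) := by
  have h : Lg.IsManinTriple Lst LV := ⟨hphi, hsub₁, hsub₂, hinv₁, hinv₂⟩
  refine ⟨h.phi_dual_apply, fun x y ξ η => ?_⟩
  simpa using h.bracket_dual_apply_bracket_phi (Lg.phi.symm x) (Lg.phi.symm y) ξ η
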